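/- Let X be a compact metric space. The set { f ∈ C(X,X) : dim CR(f) = 0 } is a Gδ subset of C(X,X), where dim is the topological (covering) dimension. Equivalently, it equals the intersection over n of the open sets { f : every connected component of CR(f) has diameter < 1/n }. -/

import Mathlib

/-!
`CR(f)` is the intersection over `k` of the closures of the sets of points lying on a periodic
`1/(k+1)`-chain, so it is compact, and it depends upper semicontinuously on `f`: an `ε`-chain of
`g` is an `(ε + d(f, g))`-chain of `f`. A compact set is totally disconnected iff for every `ε > 0`
it can be covered by finitely many pairwise disjoint open sets of diameter `< ε`. Such a cover of
`CR(f)` still covers `CR(g)` for `g` near `f`, so for each `ε` the maps admitting one form an open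
set, and the maps with totally disconnected `CR(f)` are the intersection of these over
`ε = 1/(n+1)`.
-/

open Metric Set

variable {X : Type*} [MetricSpace X]

/-- The set of chain recurrent points of `f`. -/
def ChainRec (f : X → X) : Set X :=
  {x | ∀ ε > (0:ℝ), ∃ n : ℕ, 0 < n ∧ ∃ c : ℕ → X, c 0 = x ∧ c n = x ∧
    ∀ i < n, dist (f (c i)) (c (i+1)) < ε}

/-- The chain recurrent set of `f` restricted to a subset `A` (chains lie in `A`),
    i.e. the chain recurrent set of `f` as a self-map of the subspace `A`. -/
def ChainRecIn (f : X → X) (A : Set X) : Set X :=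
  {x | x ∈ A ∧ ∀ ε > (0:ℝ), ∃ n : ℕ, 0 < n ∧ ∃ c : ℕ → X, (∀ i ≤ n, c i ∈ A) ∧
    c 0 = x ∧ c n = x ∧ ∀ i < n, dist (f (c i)) (c (i+1)) < ε}

open Filter Topology Function

def EpsChainRec (f : X → X) (ε : ℝ) : Set X :=
  {x | ∃ n : ℕ, 0 < n ∧ ∃ c : ℕ → X, c 0 = x ∧ c n = x ∧
    ∀ i < n, dist (f (c i)) (c (i + 1)) < ε}

lemma epsChainRec_mono (f : X → X) : Monotone (EpsChainRec f) := by
  rintro η η' h x ⟨n, hn, c, hc0, hcn, hc⟩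
  exact ⟨n, hn, c, hc0, hcn, fun i hi => (hc i hi).trans_le h⟩

lemma closure_epsChainRec_subset {f : X → X} (hf : Continuous f) {η η' : ℝ} (h : η < η') :
    closure (EpsChainRec f η) ⊆ EpsChainRec f η' := by
  intro x hx
  set δ := (η' - η) / 2
  have hδ : 0 < δ := by simp only [δ]; linarith
  obtain ⟨ρ, hρ, hfρ⟩ := Metric.continuousAt_iff.mp (hf.continuousAt (x := x)) δ hδ
  obtain ⟨y, ⟨n, hn, c, hc0, hcn, hc⟩, hxy⟩ := Metric.mem_closure_iff.mp hx (min ρ δ)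
    (lt_min hρ hδ)
  let c' : ℕ → X := fun i => if i = 0 ∨ i = n then x else c i
  have hclose : ∀ i ≤ n, dist (c' i) (c i) < δ ∧ dist (f (c' i)) (f (c i)) < δ := by
    intro i hi
    by_cases hend : i = 0 ∨ i = n
    · obtain rfl : c i = y := by rcases hend with rfl | rfl <;> assumption
      simp only [c', if_pos hend]
      rw [dist_comm (f x)]
      exact ⟨hxy.trans_le (min_le_right _ _),
        hfρ (by rw [dist_comm]; exact hxy.trans_le (min_le_left _ _))⟩
    · simp [c', if_neg hend, hδ]
  refine ⟨n, hn, c', by simp [c'], by simp [c'], fun i hi => ?_⟩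
  calc dist (f (c' i)) (c' (i + 1))
      ≤ dist (f (c' i)) (f (c i)) + dist (f (c i)) (c (i + 1)) + dist (c (i + 1)) (c' (i + 1)) :=
        dist_triangle4 _ _ _ _
    _ < δ + η + δ := by
        gcongr
        · exact (hclose i hi.le).2
        · exact hc i hi
        · rw [dist_comm]; exact (hclose (i + 1) hi).1
    _ = η' := by ring

lemma chainRec_eq_iInter_closure {f : X → X} (hf : Continuous f) :
    ChainRec f = ⋂ k : ℕ, closure (EpsChainRec f (1 / (k + 1))) := by
  refine Subset.antisymm (fun x hx => mem_iInter.mpr fun k => subset_closure <| hx _ ?_)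
    fun x hx ε hε => ?_
  · positivity
  · obtain ⟨k, hk⟩ := exists_nat_one_div_lt hε
    exact closure_epsChainRec_subset hf hk (mem_iInter.mp hx k)

lemma isClosed_chainRec {f : X → X} (hf : Continuous f) : IsClosed (ChainRec f) := by
  rw [chainRec_eq_iInter_closure hf]
  exact isClosed_iInter fun _ => isClosed_closure

lemma epsChainRec_subset_dist_add [CompactSpace X] (f g : C(X, X)) (ε : ℝ) :
    EpsChainRec g ε ⊆ EpsChainRec f (dist f g + ε) := by
  rintro x ⟨n, hn, c, hc0, hcn, hc⟩
  refine ⟨n, hn, c, hc0, hcn, fun i hi => ?_⟩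
  calc dist (f (c i)) (c (i + 1)) ≤ dist (f (c i)) (g (c i)) + dist (g (c i)) (c (i + 1)) :=
        dist_triangle _ _ _
    _ < dist f g + ε := add_lt_add_of_le_of_lt (ContinuousMap.dist_apply_le_dist _) (hc i hi)

lemma eventually_chainRec_subset [CompactSpace X] {f : C(X, X)} {U : Set X} (hU : IsOpen U)
    (h : ChainRec f ⊆ U) : ∀ᶠ g : C(X, X) in 𝓝 f, ChainRec g ⊆ U := by
  set V : ℕ → Set X := fun k => closure (EpsChainRec f (1 / (k + 1)))
  have hV : Antitone V := fun k l hkl =>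
    closure_mono (epsChainRec_mono f (Nat.one_div_le_one_div hkl))
  obtain ⟨k, hk⟩ := exists_subset_nhds_of_isCompact' hV.directed_ge
    (fun _ => isClosed_closure.isCompact) (fun _ => isClosed_closure) (U := U) <| by
      rw [← chainRec_eq_iInter_closure f.continuous]
      exact fun x hx => hU.mem_nhds (h hx)
  set η : ℝ := 1 / (k + 1)
  have hη : 0 < η := Nat.one_div_pos_of_nat
  filter_upwards [ball_mem_nhds f (half_pos hη)] with g hg x hx
  have hfg : dist f g + η / 2 ≤ η := by rw [mem_ball'] at hg; linarith
  exact hk <| subset_closure <|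
    epsChainRec_mono f hfg (epsChainRec_subset_dist_add f g _ (hx _ (half_pos hη)))

lemma IsPreconnected.subset_of_subset_iUnion {α ι : Type*} [TopologicalSpace α] {s : Set α}
    {U : ι → Set α} (hs : IsPreconnected s) (hU : ∀ i, IsOpen (U i))
    (hdisj : Pairwise (Disjoint on U)) (hsU : s ⊆ ⋃ i, U i) {x : α} (hxs : x ∈ s) {i : ι}
    (hxi : x ∈ U i) : s ⊆ U i := by
  refine hs.subset_of_closure_inter_subset (hU i) ⟨x, hxs, hxi⟩ ?_
  rintro y ⟨hy_cl, hys⟩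
  obtain ⟨j, hyj⟩ := mem_iUnion.mp (hsU hys)
  obtain rfl : j = i := by
    by_contra hji
    exact disjoint_left.mp ((hdisj hji).closure_right (hU j)) hyj hy_cl
  exact hyj

lemma eventually_pairwise_disjoint_thickening {α ι : Type*} [EMetricSpace α] [Finite ι]
    {A : ι → Set α} (hA : ∀ i, IsCompact (A i)) (hdisj : Pairwise (Disjoint on A)) :
    ∀ᶠ δ in 𝓝[>] (0 : ℝ), Pairwise (Disjoint on fun i => thickening δ (A i)) := by
  refine eventually_all.mpr fun i => eventually_all.mpr fun j =>
    eventually_imp_distrib_left.mpr fun hij => ?_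
  obtain ⟨δ, hδ, h⟩ := (hdisj hij).exists_thickenings (hA i) (hA j).isClosed
  filter_upwards [Ioo_mem_nhdsGT hδ] with r hr
  exact h.mono (thickening_mono hr.2.le _) (thickening_mono hr.2.le _)

def HasSmallDisjointOpenCover (K : Set X) (ε : ℝ) : Prop :=
  ∃ (m : ℕ) (U : Fin m → Set X), (∀ i, IsOpen (U i)) ∧ Pairwise (Disjoint on U) ∧
    (∀ i, ∀ x ∈ U i, ∀ y ∈ U i, dist x y < ε) ∧ K ⊆ ⋃ i, U i

lemma HasSmallDisjointOpenCover.mono {K : Set X} {ε ε' : ℝ} (h : HasSmallDisjointOpenCover K ε)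
    (hε : ε ≤ ε') : HasSmallDisjointOpenCover K ε' := by
  obtain ⟨m, U, hopen, hdisj, hsmall, hcover⟩ := h
  exact ⟨m, U, hopen, hdisj, fun i x hx y hy => (hsmall i x hx y hy).trans_le hε, hcover⟩

lemma IsCompact.hasSmallDisjointOpenCover {K : Set X} (hK : IsCompact K)
    (htd : IsTotallyDisconnected K) {ε : ℝ} (hε : 0 < ε) : HasSmallDisjointOpenCover K ε := by
  have : CompactSpace K := isCompact_iff_compactSpace.mp hK
  have : TotallyDisconnectedSpace K := totallyDisconnectedSpace_subtype_iff.mpr htd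
  have hS : {p : X × X | dist p.1 p.2 < ε / 2} ∈ 𝓝ˢ (diagonal X) :=
    (isOpen_lt continuous_dist continuous_const).mem_nhdsSet.mpr fun p (hp : p.1 = p.2) => by
      simp [hp, hε]
  obtain ⟨m, D, -, hDsmall, hDcover, hDdisj⟩ :=
    (ContinuousMap.mk ((↑) : K → X)).exists_disjoint_nonempty_clopen_cover_of_mem_nhds_diagonal hS
  set A : Fin m → Set X := fun i => (↑) '' (D i : Set K)
  have hAdisj : Pairwise (Disjoint on A) := fun i j hij =>
    (disjoint_image_iff Subtype.val_injective).mpr (TopologicalSpace.Clopens.coe_disjoint.mpr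
      (hDdisj hij))
  have hδ_small : ∀ᶠ δ in 𝓝[>] (0 : ℝ), δ ∈ Ioo 0 (ε / 4) := Ioo_mem_nhdsGT (by positivity)
  obtain ⟨δ, hδ, hdisj⟩ := (hδ_small.and
    (eventually_pairwise_disjoint_thickening
      (fun i => (D i).isClopen.isClosed.isCompact.image continuous_subtype_val) hAdisj)).exists
  refine ⟨m, fun i => thickening δ (A i), fun _ => isOpen_thickening, hdisj, ?_, ?_⟩
  · rintro i x hx y hy
    obtain ⟨_, ⟨a, ha, rfl⟩, hxa⟩ := mem_thickening_iff.mp hx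
    obtain ⟨_, ⟨b, hb, rfl⟩, hyb⟩ := mem_thickening_iff.mp hy
    calc dist x y ≤ dist x a + dist (a : X) b + dist (b : X) y := dist_triangle4 _ _ _ _
      _ < δ + ε / 2 + δ := by
          gcongr
          · exact hDsmall i a ha b hb
          · rwa [dist_comm]
      _ < ε := by linarith [hδ.2]
  · intro x hx
    obtain ⟨i, hi⟩ := mem_iUnion.mp (hDcover (mem_univ (⟨x, hx⟩ : K)))
    exact mem_iUnion.mpr ⟨i, self_subset_thickening hδ.1 _ ⟨_, hi, rfl⟩⟩

lemma IsTotallyDisconnected.of_hasSmallDisjointOpenCover {K : Set X}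
    (h : ∀ ε > 0, HasSmallDisjointOpenCover K ε) : IsTotallyDisconnected K := by
  intro t htK ht a ha b hb
  refine eq_of_forall_dist_le fun ε hε => ?_
  obtain ⟨m, U, hopen, hdisj, hsmall, hcover⟩ := h ε hε
  obtain ⟨i, hai⟩ := mem_iUnion.mp (hcover (htK ha))
  have htU := ht.subset_of_subset_iUnion hopen hdisj (htK.trans hcover) ha hai
  exact (hsmall i a hai b (htU hb)).le

lemma isTotallyDisconnected_iff_connectedComponentIn_eq_singleton {α : Type*}
    [TopologicalSpace α] {s : Set α} :
    IsTotallyDisconnected s ↔ ∀ x ∈ s, connectedComponentIn s x = {x} := by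
  refine ⟨fun h x hx => ?_, fun h t hts ht a ha b hb => ?_⟩
  · exact (h _ (connectedComponentIn_subset _ _) isPreconnected_connectedComponentIn
      ).eq_singleton_of_mem (mem_connectedComponentIn hx)
  · have hta : t ⊆ {a} := h a (hts ha) ▸ ht.subset_connectedComponentIn ha hts
    rw [hta ha, hta hb]

lemma isOpen_setOf_hasSmallDisjointOpenCover_chainRec [CompactSpace X] (ε : ℝ) :
    IsOpen {f : C(X, X) | HasSmallDisjointOpenCover (ChainRec f) ε} := by
  refine isOpen_iff_eventually.mpr fun f ⟨m, U, hopen, hdisj, hsmall, hcover⟩ => ?_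
  filter_upwards [eventually_chainRec_subset (isOpen_iUnion hopen) hcover] with g hg
  exact ⟨m, U, hopen, hdisj, hsmall, hg⟩

theorem stmt10 [CompactSpace X] :
    IsGδ {f : C(X, X) | ∀ x ∈ ChainRec (⇑f),
      connectedComponentIn (ChainRec (⇑f)) x = {x}} := by
  have hsplit : {f : C(X, X) | ∀ x ∈ ChainRec (⇑f),
      connectedComponentIn (ChainRec (⇑f)) x = {x}} =
      ⋂ n : ℕ, {f : C(X, X) | HasSmallDisjointOpenCover (ChainRec f) (1 / (n + 1))} := by
    ext f
    simp only [mem_ofPred_eq, mem_iInter,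
      ← isTotallyDisconnected_iff_connectedComponentIn_eq_singleton]
    refine ⟨fun h n => (isClosed_chainRec f.continuous).isCompact.hasSmallDisjointOpenCover h
      Nat.one_div_pos_of_nat, fun h => .of_hasSmallDisjointOpenCover fun ε hε => ?_⟩
    obtain ⟨n, hn⟩ := exists_nat_one_div_lt hε
    exact (h n).mono hn.le
  rw [hsplit]
  exact .iInter_of_isOpen fun _ => isOpen_setOf_hasSmallDisjointOpenCover_chainRec _
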